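/- Let a ~ N(0, α) and b ~ N(0, 1) be independent. The function α ↦ P[a ≥ b | a ≥ 0, b ≥ 0] = (2/√(π²α)) ∫₀^∞ e^{-a²/(2α)} ∫₀^a e^{-b²/2} db da is monotonically increasing in α on (0, ∞). -/

import Mathlib

/-! Substituting `u = √α t` turns the expression into
`(2 / π) ∫₀^∞ e^{-t²/2} G(√α t) dt` with `G x = ∫₀^x e^{-v²/2} dv`. Since `G` is strictly
increasing and bounded, the integrand increases strictly with `α` at every `t > 0`. -/

open MeasureTheory Real Set
open scoped Interval

theorem setIntegral_lt_setIntegral {X : Type*} [MeasurableSpace X] {μ : Measure X} {s : Set X}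
    {f g : X → ℝ} (hs : MeasurableSet s) (hμs : μ s ≠ 0) (hf : IntegrableOn f s μ)
    (hg : IntegrableOn g s μ) (hlt : ∀ x ∈ s, f x < g x) :
    ∫ x in s, f x ∂μ < ∫ x in s, g x ∂μ := by
  rw [← sub_pos, ← integral_sub hg hf]
  have hsupp : Function.support (fun x => g x - f x) ∩ s = s :=
    inter_eq_self_of_subset_right fun x hx => sub_ne_zero.2 (hlt x hx).ne'
  rw [setIntegral_pos_iff_support_of_nonneg_ae (f := fun x => g x - f x) _ (hg.sub hf), hsupp]
  · exact pos_iff_ne_zero.2 hμs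
  · filter_upwards [ae_restrict_mem hs] with x hx
    exact sub_nonneg.2 (hlt x hx).le

theorem strictMono_intervalIntegral_of_pos {f : ℝ → ℝ} (hf : Continuous f)
    (hpos : ∀ x, 0 < f x) (a : ℝ) : StrictMono fun x => ∫ v in a..x, f v := by
  intro x y hxy
  have hint : ∀ a b, IntervalIntegrable f volume a b := hf.intervalIntegrable
  have hdiff := intervalIntegral.integral_interval_sub_left (hint a y) (hint a x)
  have hpos' := intervalIntegral.intervalIntegral_pos_of_pos_on (hint x y) (fun v _ => hpos v) hxy
  dsimp only
  linarith

theorem norm_intervalIntegral_le_integral_of_nonneg {f : ℝ → ℝ} (hf : Integrable f)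
    (hnn : 0 ≤ f) (a b : ℝ) : ‖∫ v in a..b, f v‖ ≤ ∫ v, f v :=
  calc ‖∫ v in a..b, f v‖ ≤ ∫ v in Ι a b, ‖f v‖ :=
        intervalIntegral.norm_integral_le_integral_norm_uIoc
    _ = ∫ v in Ι a b, f v := by simp_rw [norm_of_nonneg (hnn _)]
    _ ≤ ∫ v, f v := setIntegral_le_integral hf (ae_of_all _ hnn)

theorem strictMono_setIntegral_Ioi_mul_comp_mul {w g : ℝ → ℝ} {C : ℝ}
    (hw : IntegrableOn w (Ioi 0)) (hw_pos : ∀ t ∈ Ioi 0, 0 < w t) (hg : StrictMono g)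
    (hg_bdd : ∀ x, ‖g x‖ ≤ C) :
    StrictMono fun c => ∫ t in Ioi 0, w t * g (c * t) := by
  have hint : ∀ c, IntegrableOn (fun t => w t * g (c * t)) (Ioi 0) := fun c =>
    hw.mul_bdd (hg.monotone.measurable.comp (measurable_const_mul c)).aestronglyMeasurable
      (ae_of_all _ fun t => hg_bdd _)
  intro c c' hcc
  exact setIntegral_lt_setIntegral measurableSet_Ioi (by simp) (hint c) (hint c') fun t ht =>
    mul_lt_mul_of_pos_left (hg (mul_lt_mul_of_pos_right hcc ht)) (hw_pos t ht)

theorem setIntegral_Ioi_exp_mul_eq_sqrt_mul {α : ℝ} (hα : 0 < α) (g : ℝ → ℝ) :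
    ∫ u in Ioi 0, exp (-u ^ 2 / (2 * α)) * g u
      = √α * ∫ t in Ioi 0, exp (-t ^ 2 / 2) * g (√α * t) := by
  have hcov := integral_comp_mul_left_Ioi' (fun u => exp (-u ^ 2 / (2 * α)) * g u) 0
    (sqrt_pos.2 hα)
  rw [mul_zero] at hcov
  rw [← hcov, smul_eq_mul]
  congr 1
  refine setIntegral_congr_fun measurableSet_Ioi fun t _ => ?_
  rw [mul_pow, sq_sqrt hα.le]
  field_simp

theorem integrable_exp_neg_sq_div_two : Integrable fun x : ℝ => exp (-x ^ 2 / 2) :=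
  (integrable_exp_neg_mul_sq one_half_pos).congr (ae_of_all _ fun x => by ring_nf)

theorem stmt5 :
    StrictMonoOn
      (fun α : ℝ => 2 / Real.sqrt (π ^ 2 * α) *
        ∫ u in Set.Ioi (0 : ℝ),
          Real.exp (-u ^ 2 / (2 * α)) * ∫ v in (0 : ℝ)..u, Real.exp (-v ^ 2 / 2))
      (Set.Ioi 0) := by
  set G : ℝ → ℝ := fun x => ∫ v in (0 : ℝ)..x, exp (-v ^ 2 / 2)
  have hG_mono : StrictMono G :=
    strictMono_intervalIntegral_of_pos (by fun_prop) (fun _ => exp_pos _) 0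
  have hG_bdd : ∀ x, ‖G x‖ ≤ ∫ v, exp (-v ^ 2 / 2) :=
    norm_intervalIntegral_le_integral_of_nonneg integrable_exp_neg_sq_div_two
      (fun _ => (exp_pos _).le) 0
  have hJ_mono := strictMono_setIntegral_Ioi_mul_comp_mul
    integrable_exp_neg_sq_div_two.integrableOn (fun _ _ => exp_pos _) hG_mono hG_bdd
  have hform : ∀ α > 0, 2 / √(π ^ 2 * α) * ∫ u in Ioi 0, exp (-u ^ 2 / (2 * α)) * G u
      = 2 / π * ∫ t in Ioi 0, exp (-t ^ 2 / 2) * G (√α * t) := fun α hα => by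
    rw [setIntegral_Ioi_exp_mul_eq_sqrt_mul hα, sqrt_mul (sq_nonneg π), sqrt_sq pi_pos.le]
    field_simp [(sqrt_pos.2 hα).ne']
  intro a ha b hb hab
  dsimp only
  rw [hform a ha, hform b hb]
  exact mul_lt_mul_of_pos_left (hJ_mono (sqrt_lt_sqrt (le_of_lt ha) hab)) (by positivity)
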